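/- arXiv:2405.17401 — 6 statements merged into one kernel-verified Lean document; each statement's English description precedes it below -/
import Mathlib

section
/- Let d ≥ 1, let t₀ < 1 and γ > 0 be real, and let x₀, x₁ ∈ ℝ^d. For every path y on [t₀, 1] (with continuous derivative y' on [t₀,1]) satisfying y(t₀) = x₀, the total cost satisfies ∫_{t₀}^{1} ½‖y'(t)‖² dt + (γ/2)‖y(1) − x₁‖² ≥ γ‖x₁ − x₀‖² / (2(1 + γ(1 − t₀))). Moreover, equality holds for the path y*(t) = x₀ + (t − t₀) • (γ/(1 + γ(1 − t₀))) • (x₁ − x₀), i.e., the constant control u* = γ(x₁ − x₀)/(1 + γ(1 − t₀)) is optimal for the finite-γ problem of Proposition 1. -/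
open MeasureTheory intervalIntegral RealInnerProductSpace

set_option maxHeartbeats 1000000

private lemma aux_quad (g A B I : ℝ) (hg : 0 < g)
    (h0 : (0:ℝ) ≤ A + 2 * (g⁻¹ * I) + g⁻¹^2 * B) :
    -I - B / (2*g) ≤ (g/2) * A := by
  have h := mul_nonneg (by positivity : (0:ℝ) ≤ g/2) h0
  have hid : g/2 * (A + 2 * (g⁻¹ * I) + g⁻¹^2 * B) = g/2 * A + I + B/(2*g) := by
    field_simp
  rw [hid] at h
  linarith

/-- Finite-γ problem of Proposition 1: every path starting at `x₀` has total cost at least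
`γ‖x₁ − x₀‖² / (2(1 + γ(1 − t₀)))`, and equality holds for the straight-line path
`y*(t) = x₀ + (t − t₀) • (γ/(1 + γ(1 − t₀))) • (x₁ − x₀)` generated by the constant
control `u* = γ(x₁ − x₀)/(1 + γ(1 − t₀))`. -/
theorem finite_gamma_optimal_control {d : ℕ} (hd : 1 ≤ d) (t₀ γ : ℝ)
    (ht₀ : t₀ < 1) (hγ : 0 < γ) (x₀ x₁ : EuclideanSpace ℝ (Fin d)) :
    (∀ y y' : ℝ → EuclideanSpace ℝ (Fin d),
      (∀ t ∈ Set.Icc t₀ 1, HasDerivAt y (y' t) t) → ContinuousOn y' (Set.Icc t₀ 1) →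
      y t₀ = x₀ →
      (∫ t in t₀..1, ((1 : ℝ) / 2) * ‖y' t‖ ^ 2) + (γ / 2) * ‖y 1 - x₁‖ ^ 2
        ≥ γ * ‖x₁ - x₀‖ ^ 2 / (2 * (1 + γ * (1 - t₀)))) ∧
    (∀ y : ℝ → EuclideanSpace ℝ (Fin d),
      (∀ t, y t = x₀ + (t - t₀) • (γ / (1 + γ * (1 - t₀))) • (x₁ - x₀)) →
      y t₀ = x₀ ∧
      (∀ t : ℝ, HasDerivAt y ((γ / (1 + γ * (1 - t₀))) • (x₁ - x₀)) t) ∧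
      (∫ _t in t₀..(1 : ℝ), ((1 : ℝ) / 2) * ‖(γ / (1 + γ * (1 - t₀))) • (x₁ - x₀)‖ ^ 2)
          + (γ / 2) * ‖y 1 - x₁‖ ^ 2
        = γ * ‖x₁ - x₀‖ ^ 2 / (2 * (1 + γ * (1 - t₀)))) := by
  have hT : (0 : ℝ) < 1 - t₀ := by linarith
  have hden : (0 : ℝ) < 1 + γ * (1 - t₀) := by positivity
  have hle : t₀ ≤ 1 := ht₀.le
  set κ : ℝ := γ / (1 + γ * (1 - t₀)) with hκ
  set v : EuclideanSpace ℝ (Fin d) := κ • (x₁ - x₀) with hv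
  have hnv : ‖v‖ ^ 2 = κ ^ 2 * ‖x₁ - x₀‖ ^ 2 := by
    rw [hv, norm_smul]
    have : |κ| ^ 2 = κ ^ 2 := sq_abs κ
    rw [Real.norm_eq_abs, mul_pow, this]
  constructor
  · intro y y' hderiv hcont hy0
    -- FTC
    have hintg : IntervalIntegrable y' volume t₀ 1 := hcont.intervalIntegrable_of_Icc hle
    have hftc : (∫ t in t₀..1, y' t) = y 1 - y t₀ := by
      apply intervalIntegral.integral_eq_sub_of_hasDerivAt _ hintg
      intro t ht
      exact hderiv t (by rwa [Set.uIcc_of_le hle] at ht)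
    have hIoc : IntegrableOn y' (Set.Ioc t₀ 1) volume :=
      (hcont.integrableOn_Icc).mono_set Set.Ioc_subset_Icc_self
    have hinner : (∫ t in t₀..1, (⟪v, y' t⟫ : ℝ)) = ⟪v, y 1 - x₀⟫ := by
      rw [intervalIntegral.integral_of_le hle, integral_inner hIoc,
        ← intervalIntegral.integral_of_le hle, hftc, hy0]
    -- pointwise bound: ½‖w‖² ≥ ⟪v,w⟫ - ½‖v‖²
    have hpt : ∀ w : EuclideanSpace ℝ (Fin d),
        (⟪v, w⟫ : ℝ) - (1/2) * ‖v‖^2 ≤ (1/2) * ‖w‖^2 := by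
      intro w
      have h0 : (0:ℝ) ≤ ‖w - v‖^2 := sq_nonneg _
      have hexp : ‖w - v‖^2 = ‖w‖^2 - 2 * ⟪w, v⟫ + ‖v‖^2 :=
        norm_sub_sq_real w v
      have := real_inner_comm v w
      nlinarith [h0, hexp]
    have hmono : (∫ t in t₀..1, ((⟪v, y' t⟫ : ℝ) - (1/2) * ‖v‖^2))
        ≤ ∫ t in t₀..1, ((1 : ℝ)/2) * ‖y' t‖^2 := by
      apply intervalIntegral.integral_mono_on hle
      · apply ContinuousOn.intervalIntegrable_of_Icc hle
        exact ((continuousOn_const.inner hcont).sub continuousOn_const)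
      · apply ContinuousOn.intervalIntegrable_of_Icc hle
        exact (continuousOn_const.mul ((hcont.norm).pow 2))
      · intro t _; exact hpt (y' t)
    have hsplit : (∫ t in t₀..1, ((⟪v, y' t⟫ : ℝ) - (1/2) * ‖v‖^2))
        = ⟪v, y 1 - x₀⟫ - (1 - t₀) * ((1/2) * ‖v‖^2) := by
      rw [intervalIntegral.integral_sub, hinner, intervalIntegral.integral_const]
      · simp [smul_eq_mul]
      · apply ContinuousOn.intervalIntegrable_of_Icc hle
        exact continuousOn_const.inner hcont
      · exact intervalIntegrable_const
    -- endpoint bound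
    have hend : -(⟪v, y 1 - x₁⟫ : ℝ) - ‖v‖^2 / (2*γ) ≤ (γ/2) * ‖y 1 - x₁‖^2 := by
      set w := y 1 - x₁ with hw
      have h0 : (0:ℝ) ≤ ‖w + γ⁻¹ • v‖^2 := sq_nonneg _
      have hexp : ‖w + γ⁻¹ • v‖^2 = ‖w‖^2 + 2 * ⟪w, γ⁻¹ • v⟫ + ‖γ⁻¹ • v‖^2 :=
        norm_add_sq_real w (γ⁻¹ • v)
      have h1 : (⟪w, γ⁻¹ • v⟫ : ℝ) = γ⁻¹ * ⟪v, w⟫ := by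
        rw [real_inner_smul_right, real_inner_comm]
      have h2 : ‖γ⁻¹ • v‖^2 = γ⁻¹^2 * ‖v‖^2 := by
        rw [norm_smul, Real.norm_eq_abs, mul_pow, sq_abs]
      rw [hexp, h1, h2] at h0
      exact aux_quad γ (‖w‖^2) (‖v‖^2) (⟪v, w⟫) hγ h0
    -- combine
    have hcomb : (⟪v, y 1 - x₀⟫ : ℝ) - (1 - t₀) * ((1/2) * ‖v‖^2)
        + (-(⟪v, y 1 - x₁⟫) - ‖v‖^2 / (2*γ))
        = ⟪v, x₁ - x₀⟫ - (1 - t₀) * ((1/2) * ‖v‖^2) - ‖v‖^2 / (2*γ) := by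
      have : (⟪v, y 1 - x₀⟫ : ℝ) - ⟪v, y 1 - x₁⟫ = ⟪v, x₁ - x₀⟫ := by
        rw [← inner_sub_right]
        congr 1
        abel
      linarith [this]
    have hvin : (⟪v, x₁ - x₀⟫ : ℝ) = κ * ‖x₁ - x₀‖^2 := by
      rw [hv, real_inner_smul_left, real_inner_self_eq_norm_sq]
    have hfinal : (⟪v, x₁ - x₀⟫ : ℝ) - (1 - t₀) * ((1/2) * ‖v‖^2) - ‖v‖^2 / (2*γ)
        = γ * ‖x₁ - x₀‖ ^ 2 / (2 * (1 + γ * (1 - t₀))) := by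
      rw [hvin, hnv, hκ]
      field_simp
      ring
    rw [ge_iff_le, ← hfinal, ← hcomb]
    linarith [hmono, hend, hsplit]
  · intro y hy
    have hy0 : y t₀ = x₀ := by rw [hy t₀]; simp
    refine ⟨hy0, ?_, ?_⟩
    · intro t
      have h1 : HasDerivAt (fun t : ℝ => x₀ + (t - t₀) • v) ((1:ℝ) • v) t := by
        exact (((hasDerivAt_id t).sub_const t₀).smul_const v).const_add x₀
      rw [one_smul] at h1
      have : y = fun t : ℝ => x₀ + (t - t₀) • v := funext hy
      rw [this]
      exact h1
    · rw [intervalIntegral.integral_const, hy 1]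
      have hy1 : x₀ + ((1:ℝ) - t₀) • v - x₁ = ((1 - t₀) * κ - 1) • (x₁ - x₀) := by
        rw [hv, smul_smul, sub_smul, one_smul]
        abel
      rw [hy1]
      have hns : ‖((1 - t₀) * κ - 1) • (x₁ - x₀)‖^2
          = ((1 - t₀) * κ - 1)^2 * ‖x₁ - x₀‖^2 := by
        rw [norm_smul, Real.norm_eq_abs, mul_pow, sq_abs]
      rw [hns, smul_eq_mul, hnv, hκ]
      field_simp
      ring
end

section
/- Let A be a real k × d matrix with Aᵀ * A invertible, let t₀ < 1 be real, let x₀ ∈ ℝ^d and y₁ ∈ ℝ^k. Define the path x(t) = x₀ + ((t − t₀)/(1 − t₀)) • ((Aᵀ * A)⁻¹ ⬝ᵥ (Aᵀ ⬝ᵥ (y₁ − A ⬝ᵥ x₀))). Then: (i) x(t₀) = x₀; (ii) for every t with t₀ ≤ t < 1, x has derivative (1/(1 − t)) • ((Aᵀ * A)⁻¹ ⬝ᵥ (Aᵀ ⬝ᵥ (y₁ − A ⬝ᵥ x(t)))) at t, so x solves the controlled dynamic dX_t = (AᵀA)⁻¹Aᵀ(y₁ − AX_t)/(1 − t) dt of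 Proposition 1; and (iii) the terminal state is x(1) = (Aᵀ * A)⁻¹ ⬝ᵥ (Aᵀ ⬝ᵥ y₁), independent of x₀. -/
/-!
Since `(AᵀA)⁻¹Aᵀ` is a left inverse of `A`, the control `(AᵀA)⁻¹Aᵀ(y₁ - AX_t)` equals `z - X_t`
with `z = (AᵀA)⁻¹Aᵀy₁`. The given path is the straight line from `x₀` at time `t₀` to `z` at
time `1`; its constant velocity `(z - x₀)/(1 - t₀)` equals `(z - X_t)/(1 - t)` because the
remaining distance `z - X_t` shrinks linearly in the remaining time `1 - t`.
-/

open Matrix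

section Bridge

variable {E : Type*} [NormedAddCommGroup E] [NormedSpace ℝ E]

noncomputable def bridge (t₀ : ℝ) (x₀ z : E) (t : ℝ) : E :=
  x₀ + ((t - t₀) / (1 - t₀)) • (z - x₀)

variable {t₀ : ℝ} (x₀ z : E)

theorem bridge_start : bridge t₀ x₀ z t₀ = x₀ := by
  simp [bridge]

theorem bridge_one (h : t₀ ≠ 1) : bridge t₀ x₀ z 1 = z := by
  rw [bridge, div_self (sub_ne_zero.mpr h.symm), one_smul, add_sub_cancel]

theorem sub_bridge (h : t₀ ≠ 1) (t : ℝ) :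
    z - bridge t₀ x₀ z t = ((1 - t) / (1 - t₀)) • (z - x₀) := by
  have h₀ : (1 : ℝ) - t₀ ≠ 0 := sub_ne_zero.mpr h.symm
  have hcoeff : (1 - t) / (1 - t₀) = 1 - (t - t₀) / (1 - t₀) := by
    field_simp
    ring
  rw [bridge, hcoeff, sub_smul, one_smul]
  abel

theorem hasDerivAt_bridge (h : t₀ ≠ 1) {t : ℝ} (ht : t ≠ 1) :
    HasDerivAt (bridge t₀ x₀ z) ((1 - t)⁻¹ • (z - bridge t₀ x₀ z t)) t := by
  have hslope : HasDerivAt (fun s : ℝ => (s - t₀) / (1 - t₀)) (1 - t₀)⁻¹ t := by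
    simpa using ((hasDerivAt_id t).sub_const t₀).div_const (1 - t₀)
  have hderiv : HasDerivAt (bridge t₀ x₀ z) ((1 - t₀)⁻¹ • (z - x₀)) t :=
    (hslope.smul_const (z - x₀)).const_add x₀
  refine hderiv.congr_deriv ?_
  rw [sub_bridge x₀ z h, smul_smul, inv_mul_eq_div,
    div_div_cancel_left' (sub_ne_zero.mpr ht.symm)]

end Bridge

theorem Matrix.mulVec_sub_mulVec_of_mul_eq_one {m n R : Type*} [Fintype m] [Fintype n]
    [DecidableEq n] [CommRing R] {P : Matrix n m R} {A : Matrix m n R} (h : P * A = 1)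
    (y : m → R) (w : n → R) :
    P *ᵥ (y - A *ᵥ w) = P *ᵥ y - w := by
  rw [mulVec_sub, mulVec_mulVec, h, one_mulVec]

theorem Matrix.transpose_mul_self_inv_mulVec_sub {m n : Type*} [Fintype m] [Fintype n]
    [DecidableEq n] {A : Matrix m n ℝ} (hA : IsUnit (Aᵀ * A)) (y : m → ℝ) (w : n → ℝ) :
    (Aᵀ * A)⁻¹ *ᵥ (Aᵀ *ᵥ (y - A *ᵥ w)) = (Aᵀ * A)⁻¹ *ᵥ (Aᵀ *ᵥ y) - w := by
  have hleft : (Aᵀ * A)⁻¹ * Aᵀ * A = 1 := by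
    rw [Matrix.mul_assoc, nonsing_inv_mul _ ((isUnit_iff_isUnit_det _).mp hA)]
  simpa only [mulVec_mulVec] using mulVec_sub_mulVec_of_mul_eq_one hleft y w

/-- The path `x(t) = x₀ + ((t − t₀)/(1 − t₀)) • ((AᵀA)⁻¹Aᵀ(y₁ − Ax₀))` satisfies
`x(t₀) = x₀`, solves the controlled dynamic
`dX_t = (AᵀA)⁻¹Aᵀ(y₁ − AX_t)/(1 − t) dt` of Proposition 1 for `t₀ ≤ t < 1`,
and has terminal state `x(1) = (AᵀA)⁻¹Aᵀy₁`, independent of `x₀`. -/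
theorem style_controlled_dynamic_solution {k d : ℕ} (A : Matrix (Fin k) (Fin d) ℝ)
    (hA : IsUnit (Aᵀ * A)) (t₀ : ℝ) (ht₀ : t₀ < 1) (x₀ : Fin d → ℝ) (y₁ : Fin k → ℝ)
    (x : ℝ → (Fin d → ℝ))
    (hx : ∀ t, x t = x₀ + ((t - t₀) / (1 - t₀)) •
      ((Aᵀ * A)⁻¹.mulVec (Aᵀ.mulVec (y₁ - A.mulVec x₀)))) :
    x t₀ = x₀ ∧
    (∀ t : ℝ, t₀ ≤ t → t < 1 →
      HasDerivAt x ((1 - t)⁻¹ • ((Aᵀ * A)⁻¹.mulVec (Aᵀ.mulVec (y₁ - A.mulVec (x t))))) t) ∧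
    x 1 = (Aᵀ * A)⁻¹.mulVec (Aᵀ.mulVec y₁) := by
  set z := (Aᵀ * A)⁻¹ *ᵥ (Aᵀ *ᵥ y₁)
  have hx_bridge : x = bridge t₀ x₀ z := by
    funext t
    rw [hx t, transpose_mul_self_inv_mulVec_sub hA, bridge]
  have ht₀_ne : t₀ ≠ 1 := ht₀.ne
  subst hx_bridge
  refine ⟨bridge_start x₀ z, fun t _ ht => ?_, bridge_one x₀ z ht₀_ne⟩
  rw [transpose_mul_self_inv_mulVec_sub hA]
  exact hasDerivAt_bridge x₀ z ht₀_ne ht.ne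
end

section
/- Let A be a real k × d matrix, let γ > 0 and t₀ < 1 be real with c := 1 − t₀, let x₀ ∈ ℝ^d and y₁ ∈ ℝ^k, and let p ∈ ℝ^d be the unique vector with (γ⁻¹ • 1 + c • (Aᵀ * A)) ⬝ᵥ p = (Aᵀ * A) ⬝ᵥ x₀ − Aᵀ ⬝ᵥ y₁. Then for every path y on [t₀, 1] (with continuous derivative y' on [t₀,1]) satisfying y(t₀) = x₀, the total cost satisfies ∫_{t₀}^{1} ½‖y'(t)‖² dt + (γ/2)‖A ⬝ᵥ y(1) − y₁‖² ≥ (c/2)‖p‖² + (γ/2)‖A ⬝ᵥ (x₀ − c • p) − y₁‖², and equality holds for the straight-line path y*(t) = x₀ − (t − t₀) • p. Hence the constant control u* = −p is optimal for the finite-γ style-constrained problem of Proposition 1. -/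
/-!
The cost of a path splits into kinetic energy and terminal cost, and each is bounded below by a
linear function of the endpoint `y 1` that is sharp for the straight line `x₀ - (t - t₀) • p`.
For the energy this is Young's inequality `⟪-p, y'⟫ - ½‖p‖² ≤ ½‖y'‖²`, integrated along the path;
for the terminal cost it is convexity of `x ↦ (γ/2)‖A x - y₁‖²` at `z = x₀ - c • p`, whose gradient
`γ Aᵀ(A z - y₁)` equals `p` by the defining equation of `p`. The two linear terms cancel.
-/

open Matrix RealInnerProductSpace Set

theorem two_inner_sub_norm_sq_le {E : Type*} [NormedAddCommGroup E] [InnerProductSpace ℝ E]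
    (v w : E) : 2 * ⟪v, w⟫ - ‖v‖ ^ 2 ≤ ‖w‖ ^ 2 := by
  nlinarith [norm_sub_sq_real w v, real_inner_comm v w]

theorem inner_sub_sub_le_integral_half_norm_sq {E : Type*} [NormedAddCommGroup E]
    [InnerProductSpace ℝ E] {y y' : ℝ → E} {a b : ℝ} (hab : a ≤ b)
    (hy : ∀ t ∈ Icc a b, HasDerivAt y (y' t) t) (hy' : ContinuousOn y' (Icc a b)) (q : E) :
    ⟪q, y b - y a⟫ - (b - a) / 2 * ‖q‖ ^ 2 ≤ ∫ t in a..b, 1 / 2 * ‖y' t‖ ^ 2 := by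
  have hg (t) (ht : t ∈ Icc a b) : HasDerivAt (fun s ↦ ⟪q, y s⟫ - s * (‖q‖ ^ 2 / 2))
      (⟪q, y' t⟫ - ‖q‖ ^ 2 / 2) t :=
    ((innerSL ℝ q).hasFDerivAt.comp_hasDerivAt t (hy t ht)).fun_sub (hasDerivAt_mul_const _)
  have hint : ContinuousOn (fun t ↦ 1 / 2 * ‖y' t‖ ^ 2) (Icc a b) := by fun_prop
  have ftc := intervalIntegral.sub_le_integral_of_hasDeriv_right_of_le hab
    (fun t ht ↦ (hg t ht).continuousAt.continuousWithinAt)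
    (fun t ht ↦ (hg t (Ioo_subset_Icc_self ht)).hasDerivWithinAt) hint.integrableOn_Icc
    (fun t _ ↦ by linarith [two_inner_sub_norm_sq_le q (y' t)])
  rw [inner_sub_right]
  linarith

section Matrix

variable {m n : Type*} [Fintype m] [Fintype n] [DecidableEq m] [DecidableEq n]

theorem inner_toEuclideanLin (A : Matrix m n ℝ) (w : EuclideanSpace ℝ m)
    (x : EuclideanSpace ℝ n) :
    ⟪w, toEuclideanLin A x⟫ = ⟪toEuclideanLin Aᵀ w, x⟫ := by
  rw [← conjTranspose_eq_transpose_of_trivial, toEuclideanLin_conjTranspose_eq_adjoint,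
    LinearMap.adjoint_inner_left]

theorem half_mul_norm_residual_sq_add_inner_le (A : Matrix m n ℝ) {γ : ℝ} (hγ : 0 ≤ γ)
    (y₁ : EuclideanSpace ℝ m) {x z p : EuclideanSpace ℝ n}
    (hgrad : γ • toEuclideanLin Aᵀ (toEuclideanLin A z - y₁) = p) :
    γ / 2 * ‖toEuclideanLin A z - y₁‖ ^ 2 + ⟪p, x - z⟫
      ≤ γ / 2 * ‖toEuclideanLin A x - y₁‖ ^ 2 := by
  have hdiff : toEuclideanLin A (x - z)
      = (toEuclideanLin A x - y₁) - (toEuclideanLin A z - y₁) := by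
    rw [map_sub]; abel
  rw [← hgrad, real_inner_smul_left, ← inner_toEuclideanLin, hdiff, inner_sub_right,
    real_inner_self_eq_norm_sq]
  nlinarith [mul_le_mul_of_nonneg_left
    (two_inner_sub_norm_sq_le (toEuclideanLin A z - y₁) (toEuclideanLin A x - y₁)) hγ]

theorem smul_toEuclideanLin_transpose_residual_eq (A : Matrix m n ℝ) {γ c : ℝ}
    (hγ : γ ≠ 0) {x₀ p : EuclideanSpace ℝ n} {y₁ : EuclideanSpace ℝ m}
    (hp : (γ⁻¹ • (1 : Matrix n n ℝ) + c • (Aᵀ * A)) *ᵥ p = (Aᵀ * A) *ᵥ x₀ - Aᵀ *ᵥ y₁) :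
    γ • toEuclideanLin Aᵀ (toEuclideanLin A (x₀ - c • p) - y₁) = p := by
  ext i
  have hpi := congrFun hp i
  simp only [add_mulVec, smul_mulVec, one_mulVec, Pi.add_apply, Pi.smul_apply, Pi.sub_apply,
    smul_eq_mul] at hpi
  simp only [toLpLin_apply, WithLp.ofLp_sub, WithLp.ofLp_smul, mulVec_sub, mulVec_smul,
    mulVec_mulVec, PiLp.smul_apply, Pi.sub_apply, Pi.smul_apply, smul_eq_mul]
  linear_combination (-γ) * hpi + p i * mul_inv_cancel₀ hγ

theorem le_energy_add_terminal_cost (A : Matrix m n ℝ) {γ t₀ : ℝ}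
    (hγ : 0 ≤ γ) (ht₀ : t₀ ≤ 1) {x₀ p : EuclideanSpace ℝ n} {y₁ : EuclideanSpace ℝ m}
    (hgrad : γ • toEuclideanLin Aᵀ (toEuclideanLin A (x₀ - (1 - t₀) • p) - y₁) = p)
    {y y' : ℝ → EuclideanSpace ℝ n} (hy : ∀ t ∈ Icc t₀ 1, HasDerivAt y (y' t) t)
    (hy' : ContinuousOn y' (Icc t₀ 1)) (hy₀ : y t₀ = x₀) :
    (1 - t₀) / 2 * ‖p‖ ^ 2 + γ / 2 * ‖toEuclideanLin A (x₀ - (1 - t₀) • p) - y₁‖ ^ 2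
      ≤ (∫ t in t₀..1, 1 / 2 * ‖y' t‖ ^ 2) + γ / 2 * ‖toEuclideanLin A (y 1) - y₁‖ ^ 2 := by
  have energy := inner_sub_sub_le_integral_half_norm_sq ht₀ hy hy' (-p)
  have terminal := half_mul_norm_residual_sq_add_inner_le A hγ y₁ (x := y 1) hgrad
  have hcross : ⟪p, y 1 - (x₀ - (1 - t₀) • p)⟫ = ⟪p, y 1 - x₀⟫ + (1 - t₀) * ‖p‖ ^ 2 := by
    rw [sub_sub_eq_add_sub, add_sub_right_comm, inner_add_right, inner_smul_right,
      real_inner_self_eq_norm_sq]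
  rw [hy₀, inner_neg_left, norm_neg] at energy
  linarith

end Matrix

/-- Finite-γ style-constrained problem of Proposition 1: with `c = 1 − t₀` and `p` the
unique solution of `(γ⁻¹ • 1 + c • AᵀA) ⬝ᵥ p = AᵀA ⬝ᵥ x₀ − Aᵀ ⬝ᵥ y₁`, every path starting
at `x₀` has total cost at least `(c/2)‖p‖² + (γ/2)‖A(x₀ − cp) − y₁‖²`, and equality holds
for the straight-line path `y*(t) = x₀ − (t − t₀) • p`; i.e. the constant control
`u* = −p` is optimal. -/
theorem finite_gamma_style_optimal_control {k d : ℕ} (A : Matrix (Fin k) (Fin d) ℝ)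
    (γ t₀ c : ℝ) (hγ : 0 < γ) (ht₀ : t₀ < 1) (hc : c = 1 - t₀)
    (x₀ : EuclideanSpace ℝ (Fin d)) (y₁ : EuclideanSpace ℝ (Fin k))
    (p : EuclideanSpace ℝ (Fin d))
    (hp : (γ⁻¹ • (1 : Matrix (Fin d) (Fin d) ℝ) + c • (Aᵀ * A)).mulVec p
      = (Aᵀ * A).mulVec x₀ - Aᵀ.mulVec y₁) :
    (∀ y y' : ℝ → EuclideanSpace ℝ (Fin d),
      (∀ t ∈ Set.Icc t₀ 1, HasDerivAt y (y' t) t) → ContinuousOn y' (Set.Icc t₀ 1) →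
      y t₀ = x₀ →
      (∫ t in t₀..1, ((1 : ℝ) / 2) * ‖y' t‖ ^ 2)
          + (γ / 2) * ‖(EuclideanSpace.equiv (Fin k) ℝ).symm (A.mulVec (y 1)) - y₁‖ ^ 2
        ≥ (c / 2) * ‖p‖ ^ 2
          + (γ / 2) * ‖(EuclideanSpace.equiv (Fin k) ℝ).symm (A.mulVec (x₀ - c • p)) - y₁‖ ^ 2) ∧
    (∀ y : ℝ → EuclideanSpace ℝ (Fin d),
      (∀ t, y t = x₀ - (t - t₀) • p) →
      y t₀ = x₀ ∧
      (∀ t : ℝ, HasDerivAt y (-p) t) ∧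
      (∫ _t in t₀..(1 : ℝ), ((1 : ℝ) / 2) * ‖(-p : EuclideanSpace ℝ (Fin d))‖ ^ 2)
          + (γ / 2) * ‖(EuclideanSpace.equiv (Fin k) ℝ).symm (A.mulVec (y 1)) - y₁‖ ^ 2
        = (c / 2) * ‖p‖ ^ 2
          + (γ / 2) * ‖(EuclideanSpace.equiv (Fin k) ℝ).symm (A.mulVec (x₀ - c • p)) - y₁‖ ^ 2) := by
  subst hc
  refine ⟨fun y y' hy hy' hy₀ ↦ ?_, fun y hy ↦ ?_⟩
  · exact le_energy_add_terminal_cost A hγ.le ht₀.le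
      (smul_toEuclideanLin_transpose_residual_eq A hγ.ne' hp) hy hy' hy₀
  · obtain rfl : y = fun t ↦ x₀ - (t - t₀) • p := funext hy
    refine ⟨by simp, fun t ↦ ?_, ?_⟩
    · simpa using (((hasDerivAt_id t).sub_const t₀).smul_const p).const_sub x₀
    · rw [intervalIntegral.integral_const, smul_eq_mul, norm_neg, WithLp.ofLp_sub,
        WithLp.ofLp_smul]
      ring
end

section
/- Let A be a real k × d matrix, let γ > 0 be real, let x₀ ∈ ℝ^d and y₁ ∈ ℝ^k, and let e denote Euler's number. Then there exists a unique w ∈ ℝ^d satisfying the terminal costate condition w = γ • Aᵀ ⬝ᵥ (A ⬝ᵥ (e • x₀ − ((e² − 1)/2) • w) − y₁); equivalently, w is the unique solution of (1 + (γ(e² − 1)/2) • (Aᵀ * A)) ⬝ᵥ w = γ • (e • ((Aᵀ * A) ⬝ᵥ x₀) − Aᵀ ⬝ᵥ y₁), which is solvable since 1 + (γ(e² − 1)/2) • (Aᵀ * A) is invertible. -/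
/-! Expanding `A *ᵥ (e • x₀ - ((e² - 1) / 2) • w)` turns the fixed-point equation into the
linear system `(1 + c • (Aᵀ * A)) *ᵥ w = b` with `c = γ (e² - 1) / 2 ≥ 0`. Its matrix is the
identity plus a positive semidefinite matrix, hence positive definite and invertible. -/

open Matrix

theorem Matrix.PosDef.one_add_smul_transpose_mul_self {m n : Type*} [Fintype m] [Fintype n]
    [DecidableEq n] (A : Matrix m n ℝ) {c : ℝ} (hc : 0 ≤ c) : (1 + c • (Aᵀ * A)).PosDef := by
  have hAA : (Aᵀ * A).PosSemidef := by
    simpa only [conjTranspose_eq_transpose_of_trivial] using posSemidef_conjTranspose_mul_self A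
  exact PosDef.one.add_posSemidef (hAA.smul hc)

theorem Matrix.existsUnique_mulVec_eq_of_isUnit {n R : Type*} [Fintype n] [DecidableEq n]
    [CommRing R] {M : Matrix n n R} (hM : IsUnit M) (b : n → R) : ∃! w, M *ᵥ w = b :=
  Function.Bijective.existsUnique
    ⟨mulVec_injective_of_isUnit hM, mulVec_surjective_iff_isUnit.2 hM⟩ b

theorem Matrix.eq_smul_transpose_mulVec_iff_one_add_smul_mulVec_eq {m n R : Type*} [Fintype m]
    [Fintype n] [DecidableEq n] [CommRing R] (A : Matrix m n R) (γ a s : R) (x w : n → R)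
    (y : m → R) :
    w = γ • Aᵀ *ᵥ (A *ᵥ (a • x - s • w) - y) ↔
      (1 + (γ * s) • (Aᵀ * A)) *ᵥ w = γ • (a • ((Aᵀ * A) *ᵥ x) - Aᵀ *ᵥ y) := by
  have hdiff : w - γ • Aᵀ *ᵥ (A *ᵥ (a • x - s • w) - y) =
      (1 + (γ * s) • (Aᵀ * A)) *ᵥ w - γ • (a • ((Aᵀ * A) *ᵥ x) - Aᵀ *ᵥ y) := by
    simp only [mulVec_sub, mulVec_smul, add_mulVec, smul_mulVec, one_mulVec, ← mulVec_mulVec]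
    module
  rw [← sub_eq_zero, hdiff, sub_eq_zero]

/-- Terminal costate condition of Proposition 2: there exists a unique `w` with
`w = γ • Aᵀ ⬝ᵥ (A ⬝ᵥ (e • x₀ − ((e² − 1)/2) • w) − y₁)`; equivalently, `w` is the unique
solution of `(1 + (γ(e² − 1)/2) • (Aᵀ * A)) ⬝ᵥ w = γ • (e • ((Aᵀ * A) ⬝ᵥ x₀) − Aᵀ ⬝ᵥ y₁)`,
solvable since `1 + (γ(e² − 1)/2) • (Aᵀ * A)` is invertible. -/
theorem terminal_costate_existence_uniqueness {k d : ℕ} (A : Matrix (Fin k) (Fin d) ℝ)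
    (γ : ℝ) (hγ : 0 < γ) (x₀ : Fin d → ℝ) (y₁ : Fin k → ℝ) :
    (∃! w : Fin d → ℝ,
      w = γ • Aᵀ.mulVec (A.mulVec (Real.exp 1 • x₀ - ((Real.exp 1 ^ 2 - 1) / 2) • w) - y₁)) ∧
    (∀ w : Fin d → ℝ,
      w = γ • Aᵀ.mulVec (A.mulVec (Real.exp 1 • x₀ - ((Real.exp 1 ^ 2 - 1) / 2) • w) - y₁) ↔
      ((1 : Matrix (Fin d) (Fin d) ℝ) + (γ * (Real.exp 1 ^ 2 - 1) / 2) • (Aᵀ * A)).mulVec w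
        = γ • (Real.exp 1 • ((Aᵀ * A).mulVec x₀) - Aᵀ.mulVec y₁)) ∧
    IsUnit ((1 : Matrix (Fin d) (Fin d) ℝ) + (γ * (Real.exp 1 ^ 2 - 1) / 2) • (Aᵀ * A)) := by
  have he : 0 ≤ Real.exp 1 ^ 2 - 1 :=
    sub_nonneg.2 (one_le_pow₀ (Real.one_le_exp zero_le_one))
  have hunit : IsUnit (1 + (γ * (Real.exp 1 ^ 2 - 1) / 2) • (Aᵀ * A)) :=
    (PosDef.one_add_smul_transpose_mul_self A (by positivity)).isUnit
  have hiff : ∀ w : Fin d → ℝ,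
      w = γ • Aᵀ *ᵥ (A *ᵥ (Real.exp 1 • x₀ - ((Real.exp 1 ^ 2 - 1) / 2) • w) - y₁) ↔
      (1 + (γ * (Real.exp 1 ^ 2 - 1) / 2) • (Aᵀ * A)) *ᵥ w
        = γ • (Real.exp 1 • ((Aᵀ * A) *ᵥ x₀) - Aᵀ *ᵥ y₁) := fun w => by
    rw [mul_div_assoc]
    exact eq_smul_transpose_mulVec_iff_one_add_smul_mulVec_eq A γ _ _ x₀ w y₁
  exact ⟨(existsUnique_congr hiff).2 (existsUnique_mulVec_eq_of_isUnit hunit _), hiff, hunit⟩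
end

section
/- Let d ≥ 1, let μ be a probability measure on ℝ^d with compact support, let a ≠ 0 and σ > 0 be real, and define the Gaussian kernel k(x, x₀) = (2πσ²)^{−d/2} exp(−‖x − a • x₀‖²/(2σ²)), the marginal density f(x) = ∫ k(x, x₀) dμ(x₀), and the vector-valued integral g(x) = ∫ k(x, x₀) • x₀ dμ(x₀). Then f(x) > 0 for all x, f is differentiable on ℝ^d with gradient ∇f(x) = ∫ (−(x − a • x₀)/σ²) k(x, x₀) dμ(x₀), and Tweedie's identity holds: a • g(x) = f(x) • x + σ² • ∇f(x) for all x ∈ ℝ^d; equivalently, the posterior mean m(x) := g(x)/f(x) satisfies m(x) = (1/a) • x + (σ²/a) • (∇f(x)/f(x)). -/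
open MeasureTheory Real

/-!
Differentiating the Gaussian kernel in `x` gives `σ² ∇ₓ k(x, x₀) = k(x, x₀) (a x₀ - x)`;
integrating against `μ` turns this into `σ² ∇f(x) = a g(x) - f(x) x`. Differentiation under the
integral sign is justified because both `k` and `‖x - a x₀‖ k` are bounded uniformly in `x₀`,
the latter by `t e^{-t²/(2σ²)} ≤ σ`.
-/

lemma mul_exp_neg_sq_div_le {σ : ℝ} (hσ : 0 < σ) (t : ℝ) :
    t * exp (-t ^ 2 / (2 * σ ^ 2)) ≤ σ := by
  have hexp := add_one_le_exp (t ^ 2 / (2 * σ ^ 2))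
  have hAMGM : t ≤ σ * (t ^ 2 / (2 * σ ^ 2) + 1) := by
    rw [mul_add, mul_one, ← sub_nonneg]
    have : σ * (t ^ 2 / (2 * σ ^ 2)) + σ - t = ((t - σ) ^ 2 + σ ^ 2) / (2 * σ) := by
      field_simp; ring
    rw [this]; positivity
  rw [neg_div, exp_neg, ← div_eq_mul_inv, div_le_iff₀ (exp_pos _)]
  exact hAMGM.trans (by gcongr)

section Kernel

variable {E : Type*} [NormedAddCommGroup E]

noncomputable def gaussKernel (c σ : ℝ) (y : E) : ℝ := c * exp (-‖y‖ ^ 2 / (2 * σ ^ 2))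

variable {c σ : ℝ}

lemma gaussKernel_pos (hc : 0 < c) (y : E) : 0 < gaussKernel c σ y := by
  unfold gaussKernel; positivity

lemma abs_gaussKernel_le (y : E) : |gaussKernel c σ y| ≤ |c| := by
  rw [gaussKernel, abs_mul, abs_of_pos (exp_pos _)]
  refine mul_le_of_le_one_right (abs_nonneg c) (exp_le_one_iff.mpr ?_)
  exact div_nonpos_of_nonpos_of_nonneg (neg_nonpos.mpr (by positivity)) (by positivity)

lemma norm_gaussKernel_smul_le [NormedSpace ℝ E] (hσ : 0 < σ) (y : E) :
    ‖gaussKernel c σ y • y‖ ≤ |c| * σ := by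
  rw [norm_smul, gaussKernel, Real.norm_eq_abs, abs_mul, abs_of_pos (exp_pos _), mul_assoc,
    mul_comm (exp _)]
  exact mul_le_mul_of_nonneg_left (mul_exp_neg_sq_div_le hσ ‖y‖) (abs_nonneg c)

@[fun_prop]
lemma continuous_gaussKernel : Continuous (gaussKernel c σ : E → ℝ) := by
  unfold gaussKernel; fun_prop

lemma hasGradientAt_gaussKernel [InnerProductSpace ℝ E] [CompleteSpace E] (y : E) :
    HasGradientAt (gaussKernel c σ) (gaussKernel c σ y • (-(σ ^ 2)⁻¹ • y)) y := by
  have h :=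
    (((hasStrictFDerivAt_norm_sq y).hasFDerivAt.const_mul (-(2 * σ ^ 2)⁻¹)).exp).const_mul c
  have hfun : gaussKernel c σ = fun y : E => c * exp (-(2 * σ ^ 2)⁻¹ * ‖y‖ ^ 2) := by
    ext z; rw [gaussKernel, neg_div, div_eq_inv_mul, neg_mul]
  rw [hasGradientAt_iff_hasFDerivAt, hfun]
  refine h.congr_fderiv (ContinuousLinearMap.ext fun z => ?_)
  simp only [InnerProductSpace.toDual_apply_apply, smul_apply,
    coe_innerSL_apply, real_inner_smul_left, smul_eq_mul, nsmul_eq_mul]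
  ring

end Kernel

section Integral

variable {E : Type*} [NormedAddCommGroup E] [InnerProductSpace ℝ E]
  [SecondCountableTopology E] [MeasurableSpace E] [BorelSpace E]
  (μ : Measure E) [IsFiniteMeasure μ] {c σ : ℝ} (a : ℝ)

lemma integrable_gaussKernel (x : E) :
    Integrable (fun x₀ => gaussKernel c σ (x - a • x₀)) μ :=
  .of_bound (by fun_prop) |c| (.of_forall fun x₀ => abs_gaussKernel_le _)

lemma integrable_gaussKernel_smul (hσ : 0 < σ) (x : E) :
    Integrable (fun x₀ => gaussKernel c σ (x - a • x₀) • (x - a • x₀)) μ :=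
  .of_bound (by fun_prop) (|c| * σ) (.of_forall fun x₀ => norm_gaussKernel_smul_le hσ _)

lemma integral_gaussKernel_pos [NeZero μ] (hc : 0 < c) (x : E) :
    0 < ∫ x₀, gaussKernel c σ (x - a • x₀) ∂μ := by
  rw [integral_pos_iff_support_of_nonneg (fun x₀ => (gaussKernel_pos hc _).le)
    (integrable_gaussKernel μ a x)]
  simp [Function.support_eq_univ fun x₀ => (gaussKernel_pos hc (x - a • x₀)).ne', NeZero.ne μ]

lemma hasGradientAt_integral_gaussKernel [CompleteSpace E] (hσ : 0 < σ) (x : E) :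
    HasGradientAt (fun x => ∫ x₀, gaussKernel c σ (x - a • x₀) ∂μ)
      (∫ x₀, gaussKernel c σ (x - a • x₀) • (-(σ ^ 2)⁻¹ • (x - a • x₀)) ∂μ) x := by
  have hcomm (φ : E → E) : InnerProductSpace.toDual ℝ E (∫ x₀, φ x₀ ∂μ) =
      ∫ x₀, InnerProductSpace.toDual ℝ E (φ x₀) ∂μ :=
    ((InnerProductSpace.toDual ℝ E).toLinearIsometry.integral_comp_comm φ).symm
  rw [hasGradientAt_iff_hasFDerivAt, hcomm]
  refine hasFDerivAt_integral_of_dominated_of_fderiv_le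
    (F := fun x x₀ => gaussKernel c σ (x - a • x₀))
    (F' := fun x x₀ => InnerProductSpace.toDual ℝ E
      (gaussKernel c σ (x - a • x₀) • (-(σ ^ 2)⁻¹ • (x - a • x₀))))
    (bound := fun _ => (σ ^ 2)⁻¹ * (|c| * σ))
    Filter.univ_mem (.of_forall fun x => by fun_prop) (integrable_gaussKernel μ a x) ?_ ?_
    (integrable_const _) (.of_forall fun x₀ x _ => ?_)
  · exact (InnerProductSpace.toDual ℝ E).continuous.comp_aestronglyMeasurable (by fun_prop)
  · refine .of_forall fun x₀ x _ => ?_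
    calc ‖InnerProductSpace.toDual ℝ E (gaussKernel c σ (x - a • x₀) • (-(σ ^ 2)⁻¹ • (x - a • x₀)))‖
        = (σ ^ 2)⁻¹ * ‖gaussKernel c σ (x - a • x₀) • (x - a • x₀)‖ := by
          rw [LinearIsometryEquiv.norm_map, smul_comm, norm_smul, norm_neg, norm_inv, norm_pow,
            Real.norm_eq_abs, abs_of_pos hσ]
      _ ≤ (σ ^ 2)⁻¹ * (|c| * σ) := by gcongr; exact norm_gaussKernel_smul_le hσ _
  · simpa only [ContinuousLinearMap.comp_id, Function.comp_def] using
      (hasGradientAt_gaussKernel (x - a • x₀)).hasFDerivAt.comp x (hasFDerivAt_sub_const (a • x₀))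

lemma smul_integral_gaussKernel_smul_eq [CompleteSpace E] (hσ : 0 < σ) (x : E) :
    a • ∫ x₀, gaussKernel c σ (x - a • x₀) • x₀ ∂μ =
      (∫ x₀, gaussKernel c σ (x - a • x₀) ∂μ) • x +
        σ ^ 2 • ∫ x₀, gaussKernel c σ (x - a • x₀) • (-(σ ^ 2)⁻¹ • (x - a • x₀)) ∂μ := by
  have hmean : a • ∫ x₀, gaussKernel c σ (x - a • x₀) • x₀ ∂μ =
      (∫ x₀, gaussKernel c σ (x - a • x₀) ∂μ) • x -
        ∫ x₀, gaussKernel c σ (x - a • x₀) • (x - a • x₀) ∂μ := by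
    rw [← integral_smul, ← integral_smul_const, ← integral_sub
      ((integrable_gaussKernel μ a x).smul_const x) (integrable_gaussKernel_smul μ a hσ x)]
    congr 1 with x₀
    rw [smul_sub, sub_sub_cancel, smul_comm]
  have hscore : σ ^ 2 • ∫ x₀, gaussKernel c σ (x - a • x₀) • (-(σ ^ 2)⁻¹ • (x - a • x₀)) ∂μ =
      -∫ x₀, gaussKernel c σ (x - a • x₀) • (x - a • x₀) ∂μ := by
    simp_rw [smul_comm _ (-(σ ^ 2)⁻¹)]
    rw [integral_smul, smul_smul, mul_neg, mul_inv_cancel₀ (by positivity), neg_one_smul]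
  rw [hmean, hscore, sub_eq_add_neg]

end Integral

theorem tweedie_identity_general {d : ℕ}
    (μ : Measure (EuclideanSpace ℝ (Fin d))) [IsProbabilityMeasure μ]
    (a σ : ℝ) (ha : a ≠ 0) (hσ : 0 < σ)
    (k : EuclideanSpace ℝ (Fin d) → EuclideanSpace ℝ (Fin d) → ℝ)
    (hk : ∀ x x₀, k x x₀ =
      (2 * Real.pi * σ ^ 2) ^ (-(d : ℝ) / 2) * Real.exp (-‖x - a • x₀‖ ^ 2 / (2 * σ ^ 2)))
    (f : EuclideanSpace ℝ (Fin d) → ℝ) (hf : ∀ x, f x = ∫ x₀, k x x₀ ∂μ)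
    (g : EuclideanSpace ℝ (Fin d) → EuclideanSpace ℝ (Fin d))
    (hg : ∀ x, g x = ∫ x₀, k x x₀ • x₀ ∂μ) :
    (∀ x, 0 < f x) ∧
    (∀ x, HasGradientAt f (∫ x₀, k x x₀ • (-(σ ^ 2)⁻¹ • (x - a • x₀)) ∂μ) x) ∧
    (∀ x, a • g x = f x • x + σ ^ 2 • gradient f x) ∧
    (∀ x, (f x)⁻¹ • g x = a⁻¹ • x + (σ ^ 2 / a) • ((f x)⁻¹ • gradient f x)) := by
  set c : ℝ := (2 * Real.pi * σ ^ 2) ^ (-(d : ℝ) / 2)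
  have hk' : ∀ x x₀, k x x₀ = gaussKernel c σ (x - a • x₀) := hk
  simp only [hk'] at hf hg ⊢
  have hf_pos x : 0 < f x := hf x ▸ integral_gaussKernel_pos μ a (by positivity) x
  have hgrad x :
      HasGradientAt f (∫ x₀, gaussKernel c σ (x - a • x₀) • (-(σ ^ 2)⁻¹ • (x - a • x₀)) ∂μ) x :=
    funext hf ▸ hasGradientAt_integral_gaussKernel μ a hσ x
  have htweedie x : a • g x = f x • x + σ ^ 2 • gradient f x := by
    rw [(hgrad x).gradient, hf, hg]
    exact smul_integral_gaussKernel_smul_eq μ a hσ x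
  refine ⟨hf_pos, hgrad, htweedie, fun x => ?_⟩
  rw [← inv_smul_smul₀ ha (g x), htweedie x]
  match_scalars <;> field_simp [(hf_pos x).ne']

/-- Tweedie's identity: for a compactly supported probability measure `μ` on `ℝ^d`,
`a ≠ 0`, `σ > 0`, Gaussian kernel `k(x,x₀) = (2πσ²)^{−d/2} exp(−‖x − a•x₀‖²/(2σ²))`,
marginal density `f(x) = ∫ k(x,x₀) dμ(x₀)` and `g(x) = ∫ k(x,x₀) • x₀ dμ(x₀)`:
`f > 0` everywhere, `f` is differentiable with gradient
`∇f(x) = ∫ (−(x − a•x₀)/σ²) k(x,x₀) dμ(x₀)`, and `a • g(x) = f(x) • x + σ² • ∇f(x)`;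
equivalently the posterior mean `m(x) = g(x)/f(x)` satisfies
`m(x) = (1/a) • x + (σ²/a) • (∇f(x)/f(x))`. -/
theorem tweedie_identity {d : ℕ} (hd : 1 ≤ d)
    (μ : Measure (EuclideanSpace ℝ (Fin d))) [IsProbabilityMeasure μ]
    (hμ : ∃ K : Set (EuclideanSpace ℝ (Fin d)), IsCompact K ∧ μ Kᶜ = 0)
    (a σ : ℝ) (ha : a ≠ 0) (hσ : 0 < σ)
    (k : EuclideanSpace ℝ (Fin d) → EuclideanSpace ℝ (Fin d) → ℝ)
    (hk : ∀ x x₀, k x x₀ =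
      (2 * Real.pi * σ ^ 2) ^ (-(d : ℝ) / 2) * Real.exp (-‖x - a • x₀‖ ^ 2 / (2 * σ ^ 2)))
    (f : EuclideanSpace ℝ (Fin d) → ℝ) (hf : ∀ x, f x = ∫ x₀, k x x₀ ∂μ)
    (g : EuclideanSpace ℝ (Fin d) → EuclideanSpace ℝ (Fin d))
    (hg : ∀ x, g x = ∫ x₀, k x x₀ • x₀ ∂μ) :
    (∀ x, 0 < f x) ∧
    (∀ x, HasGradientAt f (∫ x₀, k x x₀ • (-(σ ^ 2)⁻¹ • (x - a • x₀)) ∂μ) x) ∧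
    (∀ x, a • g x = f x • x + σ ^ 2 • gradient f x) ∧
    (∀ x, (f x)⁻¹ • g x = a⁻¹ • x + (σ ^ 2 / a) • ((f x)⁻¹ • gradient f x)) :=
  tweedie_identity_general μ a σ ha hσ k hk f hf g hg
end

section
/- Let d ≥ 1, let μ be a probability measure on ℝ^d with compact support, let 0 < t < 1, and set a = 1 − t and σ = t in the Gaussian kernel k(x, x₀) = (2πσ²)^{−d/2} exp(−‖x − a • x₀‖²/(2σ²)), with f(x) = ∫ k(x, x₀) dμ(x₀) > 0, g(x) = ∫ k(x, x₀) • x₀ dμ(x₀), and posterior mean m(x) = g(x)/f(x). Then the modulated drift of Remark 1 satisfies, for all x ∈ ℝ^d: (1/(1 − t)) • (m(x) − x) = (t/(1 − t)²) • x + (t²/(1 − t)²) • (∇f(x)/f(x)). -/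
/-!
Differentiating `f(x) = ∫ c exp(-‖x - a x₀‖² / 2σ²) dμ(x₀)` under the integral sign (legitimate
because `μ` has compact support, so the derivative of the kernel is uniformly dominated on a ball)
gives Tweedie's formula `∇f / f = (a m - x) / σ²`, expressing the score through the posterior mean
`m = g / f`. With `a = 1 - t` and `σ = t` the identity is then pure algebra.
-/

open MeasureTheory Metric InnerProductSpace

theorem Continuous.integrable_of_isCompact_of_compl_null {α E : Type*} [MeasurableSpace α]
    [TopologicalSpace α] [OpensMeasurableSpace α] [T2Space α] [NormedAddCommGroup E]
    {μ : Measure α} [IsFiniteMeasure μ] {K : Set α} (hK : IsCompact K) (hμK : μ Kᶜ = 0)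
    {h : α → E} (hh : Continuous h) : Integrable h μ := by
  rw [← Measure.restrict_eq_self_of_ae_mem (ae_iff.2 hμK)]
  exact hh.continuousOn.integrableOn_compact hK

theorem hasGradientAt_integral_of_dominated_of_gradient_le {α H : Type*} [MeasurableSpace α]
    {μ : Measure α} [NormedAddCommGroup H] [InnerProductSpace ℝ H] [CompleteSpace H]
    {F : H → α → ℝ} {F' : H → α → H} {x₀ : H} {s : Set H} {bound : α → ℝ} (hs : s ∈ nhds x₀)
    (hF_meas : ∀ᶠ x in nhds x₀, AEStronglyMeasurable (F x) μ) (hF_int : Integrable (F x₀) μ)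
    (hF'_meas : AEStronglyMeasurable (F' x₀) μ)
    (h_bound : ∀ᵐ a ∂μ, ∀ x ∈ s, ‖F' x a‖ ≤ bound a)
    (bound_integrable : Integrable bound μ)
    (h_diff : ∀ᵐ a ∂μ, ∀ x ∈ s, HasGradientAt (F · a) (F' x a) x) :
    HasGradientAt (fun x ↦ ∫ a, F x a ∂μ) (∫ a, F' x₀ a ∂μ) x₀ := by
  have h := hasFDerivAt_integral_of_dominated_of_fderiv_le
    (F' := fun x a ↦ (toDual ℝ H (F' x a) : StrongDual ℝ H)) hs hF_meas hF_int
    ((toDual ℝ H).continuous.comp_aestronglyMeasurable hF'_meas)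
    (by simpa only [LinearIsometryEquiv.norm_map] using h_bound) bound_integrable
    (by simpa only [hasGradientAt_iff_hasFDerivAt] using h_diff)
  have hcomm : ∫ a, toDual ℝ H (F' x₀ a) ∂μ = toDual ℝ H (∫ a, F' x₀ a ∂μ) :=
    (toDual ℝ H).toLinearIsometry.integral_comp_comm (F' x₀)
  rwa [hcomm] at h

noncomputable def gaussianKernel {E : Type*} [NormedAddCommGroup E] [NormedSpace ℝ E]
    (c a σ : ℝ) (x x₀ : E) : ℝ :=
  c * Real.exp (-‖x - a • x₀‖ ^ 2 / (2 * σ ^ 2))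

section GaussianKernel

variable {E : Type*} [NormedAddCommGroup E] [InnerProductSpace ℝ E] (c a σ : ℝ)

theorem abs_gaussianKernel_le (x x₀ : E) : |gaussianKernel c a σ x x₀| ≤ |c| := by
  rw [gaussianKernel, abs_mul, Real.abs_exp]
  refine mul_le_of_le_one_right (abs_nonneg c) (Real.exp_le_one_iff.2 ?_)
  exact div_nonpos_of_nonpos_of_nonneg (neg_nonpos.2 (by positivity)) (by positivity)

theorem continuous_gaussianKernel (x : E) : Continuous (gaussianKernel c a σ x) := by
  unfold gaussianKernel
  fun_prop

theorem norm_gradient_gaussianKernel_le (x x₀ : E) :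
    ‖(-(σ ^ 2)⁻¹ * gaussianKernel c a σ x x₀) • (x - a • x₀)‖
      ≤ (σ ^ 2)⁻¹ * |c| * (‖x‖ + |a| * ‖x₀‖) := by
  rw [norm_smul, Real.norm_eq_abs, abs_mul, abs_neg, abs_inv, abs_of_nonneg (sq_nonneg σ)]
  have hdist : ‖x - a • x₀‖ ≤ ‖x‖ + |a| * ‖x₀‖ := by
    simpa only [norm_smul, Real.norm_eq_abs] using norm_sub_le x (a • x₀)
  exact mul_le_mul (mul_le_mul_of_nonneg_left (abs_gaussianKernel_le c a σ x x₀)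
    (by positivity)) hdist (norm_nonneg _) (by positivity)

theorem hasGradientAt_gaussianKernel [CompleteSpace E] (x₀ x : E) :
    HasGradientAt (gaussianKernel c a σ · x₀)
      ((-(σ ^ 2)⁻¹ * gaussianKernel c a σ x x₀) • (x - a • x₀)) x := by
  have hfun : (gaussianKernel c a σ · x₀)
      = fun y ↦ c * Real.exp (-(2 * σ ^ 2)⁻¹ * ‖y - a • x₀‖ ^ 2) := by
    funext y
    rw [gaussianKernel]
    ring_nf
  rw [hasGradientAt_iff_hasFDerivAt, hfun]
  refine ((((hasFDerivAt_id x).sub_const (a • x₀)).norm_sq.const_mul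
    (-(2 * σ ^ 2)⁻¹)).exp.const_mul c).congr_fderiv ?_
  ext v
  simp [gaussianKernel]
  ring_nf

variable [MeasurableSpace E] [BorelSpace E] {μ : Measure E} [IsFiniteMeasure μ] {K : Set E}
  (hK : IsCompact K) (hμK : μ Kᶜ = 0)
include hK hμK

theorem integral_gaussianKernel_pos [NeZero μ] (hc : 0 < c) (x : E) :
    0 < ∫ x₀, gaussianKernel c a σ x x₀ ∂μ := by
  simp only [gaussianKernel]
  rw [integral_const_mul]
  exact mul_pos hc (integral_exp_pos
    (Continuous.integrable_of_isCompact_of_compl_null hK hμK (by fun_prop)))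

variable [CompleteSpace E]

theorem integral_gradient_gaussianKernel (x : E) :
    ∫ x₀, (-(σ ^ 2)⁻¹ * gaussianKernel c a σ x x₀) • (x - a • x₀) ∂μ
      = -(σ ^ 2)⁻¹ • ((∫ x₀, gaussianKernel c a σ x x₀ ∂μ) • x
        - a • ∫ x₀, gaussianKernel c a σ x x₀ • x₀ ∂μ) := by
  have hint : Integrable (gaussianKernel c a σ x) μ :=
    (continuous_gaussianKernel c a σ x).integrable_of_isCompact_of_compl_null hK hμK
  have hint_smul : Integrable (fun x₀ ↦ a • (gaussianKernel c a σ x x₀ • x₀)) μ :=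
    (continuous_const.smul ((continuous_gaussianKernel c a σ x).smul continuous_id))
      |>.integrable_of_isCompact_of_compl_null hK hμK
  calc
    _ = ∫ x₀, -(σ ^ 2)⁻¹ • (gaussianKernel c a σ x x₀ • x
          - a • (gaussianKernel c a σ x x₀ • x₀)) ∂μ := by
      congr 1 with x₀
      module
    _ = _ := by
      rw [integral_smul, integral_sub (hint.smul_const x) hint_smul, integral_smul_const,
        integral_smul]

theorem hasGradientAt_integral_gaussianKernel (x : E) :
    HasGradientAt (fun y ↦ ∫ x₀, gaussianKernel c a σ y x₀ ∂μ)
      (-(σ ^ 2)⁻¹ • ((∫ x₀, gaussianKernel c a σ x x₀ ∂μ) • x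
        - a • ∫ x₀, gaussianKernel c a σ x x₀ • x₀ ∂μ)) x := by
  have hint : ∀ y, Integrable (gaussianKernel c a σ y) μ := fun y ↦
    (continuous_gaussianKernel c a σ y).integrable_of_isCompact_of_compl_null hK hμK
  obtain ⟨R, hR⟩ := isBounded_iff_forall_norm_le.1 hK.isBounded
  have h := hasGradientAt_integral_of_dominated_of_gradient_le
    (F' := fun y x₀ ↦ (-(σ ^ 2)⁻¹ * gaussianKernel c a σ y x₀) • (y - a • x₀))
    (bound := fun _ ↦ (σ ^ 2)⁻¹ * |c| * (‖x‖ + 1 + |a| * R)) (ball_mem_nhds x one_pos)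
    (.of_forall fun y ↦ (hint y).aestronglyMeasurable) (hint x)
    (Continuous.integrable_of_isCompact_of_compl_null hK hμK
      (by have := continuous_gaussianKernel c a σ x; fun_prop)).aestronglyMeasurable
    ?bound (integrable_const _)
    (.of_forall fun x₀ y _ ↦ hasGradientAt_gaussianKernel c a σ x₀ y)
  case bound =>
    filter_upwards [ae_iff.2 hμK] with x₀ hx₀ y hy
    refine (norm_gradient_gaussianKernel_le c a σ y x₀).trans ?_
    have hy_le : ‖y‖ ≤ ‖x‖ + 1 := by
      linarith [norm_le_norm_add_norm_sub' y x, mem_ball_iff_norm.1 hy]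
    gcongr
    exact hR x₀ hx₀
  rwa [integral_gradient_gaussianKernel c a σ hK hμK x] at h

/-- Tweedie's formula. -/
theorem inv_smul_gradient_integral_gaussianKernel [NeZero μ] (hc : 0 < c) (x : E) :
    (∫ x₀, gaussianKernel c a σ x x₀ ∂μ)⁻¹ • gradient (fun y ↦ ∫ x₀, gaussianKernel c a σ y x₀ ∂μ) x
      = (σ ^ 2)⁻¹ • (a • ((∫ x₀, gaussianKernel c a σ x x₀ ∂μ)⁻¹
          • ∫ x₀, gaussianKernel c a σ x x₀ • x₀ ∂μ) - x) := by
  rw [(hasGradientAt_integral_gaussianKernel c a σ hK hμK x).gradient]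
  have hf := (integral_gaussianKernel_pos c a σ hK hμK hc x).ne'
  match_scalars <;> field_simp

end GaussianKernel

theorem modulated_drift_identity_general {d : ℕ}
    (μ : Measure (EuclideanSpace ℝ (Fin d))) [IsProbabilityMeasure μ]
    (hμ : ∃ K : Set (EuclideanSpace ℝ (Fin d)), IsCompact K ∧ μ Kᶜ = 0)
    (t : ℝ) (ht0 : 0 < t) (ht1 : t < 1)
    (k : EuclideanSpace ℝ (Fin d) → EuclideanSpace ℝ (Fin d) → ℝ)
    (hk : ∀ x x₀, k x x₀ =
      (2 * Real.pi * t ^ 2) ^ (-(d : ℝ) / 2) *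
        Real.exp (-‖x - (1 - t) • x₀‖ ^ 2 / (2 * t ^ 2)))
    (f : EuclideanSpace ℝ (Fin d) → ℝ) (hf : ∀ x, f x = ∫ x₀, k x x₀ ∂μ)
    (g : EuclideanSpace ℝ (Fin d) → EuclideanSpace ℝ (Fin d))
    (hg : ∀ x, g x = ∫ x₀, k x x₀ • x₀ ∂μ)
    (m : EuclideanSpace ℝ (Fin d) → EuclideanSpace ℝ (Fin d))
    (hm : ∀ x, m x = (f x)⁻¹ • g x) :
    ∀ x : EuclideanSpace ℝ (Fin d),
      (1 - t)⁻¹ • (m x - x)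
        = (t / (1 - t) ^ 2) • x + (t ^ 2 / (1 - t) ^ 2) • ((f x)⁻¹ • gradient f x) := by
  intro x
  obtain ⟨K, hK, hμK⟩ := hμ
  obtain rfl : k = gaussianKernel ((2 * Real.pi * t ^ 2) ^ (-(d : ℝ) / 2)) (1 - t) t :=
    funext₂ hk
  obtain rfl := funext hf
  obtain rfl := funext hg
  beta_reduce
  have hC : 0 < (2 * Real.pi * t ^ 2) ^ (-(d : ℝ) / 2) := by positivity
  rw [hm, inv_smul_gradient_integral_gaussianKernel _ _ _ hK hμK hC]
  have ht : 1 - t ≠ 0 := by linarith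
  match_scalars
  · field_simp
  · field_simp
    ring

/-- Modulated drift of Remark 1: with `a = 1 − t`, `σ = t` (`0 < t < 1`) in the Gaussian
kernel, marginal density `f`, `g(x) = ∫ k(x,x₀) • x₀ dμ(x₀)` and posterior mean
`m(x) = g(x)/f(x)`, the drift satisfies
`(1/(1 − t)) • (m(x) − x) = (t/(1 − t)²) • x + (t²/(1 − t)²) • (∇f(x)/f(x))`. -/
theorem modulated_drift_identity {d : ℕ} (hd : 1 ≤ d)
    (μ : Measure (EuclideanSpace ℝ (Fin d))) [IsProbabilityMeasure μ]
    (hμ : ∃ K : Set (EuclideanSpace ℝ (Fin d)), IsCompact K ∧ μ Kᶜ = 0)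
    (t : ℝ) (ht0 : 0 < t) (ht1 : t < 1)
    (k : EuclideanSpace ℝ (Fin d) → EuclideanSpace ℝ (Fin d) → ℝ)
    (hk : ∀ x x₀, k x x₀ =
      (2 * Real.pi * t ^ 2) ^ (-(d : ℝ) / 2) *
        Real.exp (-‖x - (1 - t) • x₀‖ ^ 2 / (2 * t ^ 2)))
    (f : EuclideanSpace ℝ (Fin d) → ℝ) (hf : ∀ x, f x = ∫ x₀, k x x₀ ∂μ)
    (g : EuclideanSpace ℝ (Fin d) → EuclideanSpace ℝ (Fin d))
    (hg : ∀ x, g x = ∫ x₀, k x x₀ • x₀ ∂μ)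
    (m : EuclideanSpace ℝ (Fin d) → EuclideanSpace ℝ (Fin d))
    (hm : ∀ x, m x = (f x)⁻¹ • g x) :
    ∀ x : EuclideanSpace ℝ (Fin d),
      (1 - t)⁻¹ • (m x - x)
        = (t / (1 - t) ^ 2) • x + (t ^ 2 / (1 - t) ^ 2) • ((f x)⁻¹ • gradient f x) :=
  modulated_drift_identity_general μ hμ t ht0 ht1 k hk f hf g hg m hm
end
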